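/- Let y_1, ..., y_m be nonzero vectors in R^2 lying in an open half-plane, with signed angles θ(y_1),...,θ(y_m) relative to a reference direction, and suppose the indices i* = argmax_i θ(y_i) and j* = argmin_i θ(y_i) are unique. Then cone({y_{i*}, y_{j*}}) = cone({y_1,...,y_m}), and no single vector y_l satisfies cone({y_l}) = cone({y_1,...,y_m}) unless m-many vectors are all positive multiples of each other. Hence {i*, j*} solves the minimum conical hull problem on the 2D plane. -/

import Mathlib

/-
With `p v = ⟪v, u⟫` and `q v = u × v` the signed angle is `arctan (q v / p v)`, and the identity
`q w * p v - q v * p w = ‖u‖² (v × w)` shows that on the half-plane `p > 0` the angle is ordered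
like the cross product: `θ v < θ w ↔ 0 < v × w`. Hence every `y i` satisfies `y j* × y i ≥ 0` and
`y i × y i* ≥ 0`, and Cramer's rule writes it as a nonnegative combination of `y j*` and `y i*`.
A single generator `y l` cannot suffice: its cone consists of nonnegative multiples of `y l`, and
the nonzero ones all have the angle of `y l`, whereas `θ (y j*) < θ (y i*)`.
-/

open Real

/-- The conical hull of the planar vectors `y i` for `i` in the finite set `S`. -/
def coneOf {m : ℕ} (S : Finset (Fin m)) (y : Fin m → (Fin 2 → ℝ)) :
    Set (Fin 2 → ℝ) :=
  {x | ∃ a : Fin m → ℝ, (∀ i, 0 ≤ a i) ∧ x = ∑ i ∈ S, a i • y i}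

/-- The signed angle of a planar vector `v` relative to the unit direction `u`
(valid on the open half-plane `⟪v,u⟫ > 0`), taking values in `(-π/2, π/2)`. -/
noncomputable def signedAngle (u v : Fin 2 → ℝ) : ℝ :=
  arctan ((v 0 * (-u 1) + v 1 * u 0) / (v 0 * u 0 + v 1 * u 1))

def cross (v w : Fin 2 → ℝ) : ℝ := v 0 * w 1 - v 1 * w 0

theorem eq_cross_div_smul_add (v w z : Fin 2 → ℝ) (h : cross v w ≠ 0) :
    z = (cross z w / cross v w) • v + (cross v z / cross v w) • w := by
  refine funext (Fin.forall_fin_two.2 ⟨?_, ?_⟩) <;>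
  · simp only [cross, Pi.add_apply, Pi.smul_apply, smul_eq_mul] at h ⊢
    rw [div_mul_eq_mul_div, div_mul_eq_mul_div, ← add_div, eq_div_iff h]
    ring

theorem exists_nonneg_smul_add_smul_of_cross_nonneg {v w z : Fin 2 → ℝ} (hvw : 0 < cross v w)
    (hvz : 0 ≤ cross v z) (hzw : 0 ≤ cross z w) :
    ∃ a b : ℝ, 0 ≤ a ∧ 0 ≤ b ∧ z = a • v + b • w :=
  ⟨_, _, div_nonneg hzw hvw.le, div_nonneg hvz hvw.le, eq_cross_div_smul_add v w z hvw.ne'⟩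

theorem signedAngle_lt_signedAngle_iff {u v w : Fin 2 → ℝ}
    (hv : 0 < v 0 * u 0 + v 1 * u 1) (hw : 0 < w 0 * u 0 + w 1 * u 1) :
    signedAngle u v < signedAngle u w ↔ 0 < cross v w := by
  have hu : 0 < u 0 ^ 2 + u 1 ^ 2 := by
    by_contra! h
    obtain ⟨h0, h1⟩ : u 0 = 0 ∧ u 1 = 0 := ⟨by nlinarith, by nlinarith⟩
    simp [h0, h1] at hv
  rw [signedAngle, signedAngle, arctan_strictMono.lt_iff_lt, div_lt_div_iff₀ hv hw, ← sub_pos,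
    ← mul_pos_iff_of_pos_left hu (b := cross v w)]
  exact iff_of_eq (congrArg _ (by unfold cross; ring))

theorem signedAngle_le_signedAngle_iff {u v w : Fin 2 → ℝ}
    (hv : 0 < v 0 * u 0 + v 1 * u 1) (hw : 0 < w 0 * u 0 + w 1 * u 1) :
    signedAngle u v ≤ signedAngle u w ↔ 0 ≤ cross v w := by
  rw [← not_lt, signedAngle_lt_signedAngle_iff hw hv, not_lt, cross, cross]
  constructor <;> intro h <;> linarith

theorem signedAngle_smul (u v : Fin 2 → ℝ) {s : ℝ} (hs : s ≠ 0) :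
    signedAngle u (s • v) = signedAngle u v := by
  simp only [signedAngle, Pi.smul_apply, smul_eq_mul, mul_assoc, ← mul_add, mul_div_mul_left _ _ hs]

theorem coneOf_eq_hull {m : ℕ} (S : Finset (Fin m)) (y : Fin m → (Fin 2 → ℝ)) :
    coneOf S y = PointedCone.hull ℝ (y '' S) := by
  ext x
  rw [SetLike.mem_coe, Submodule.mem_span_image_finset_iff_exists_fun']
  constructor
  · rintro ⟨a, ha, rfl⟩
    exact ⟨fun i => ⟨a i, ha i⟩, rfl⟩
  · rintro ⟨c, rfl⟩
    exact ⟨fun i => c i, fun i => (c i).2, rfl⟩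

theorem mem_coneOf_singleton {m : ℕ} {y : Fin m → (Fin 2 → ℝ)} {l : Fin m} {x : Fin 2 → ℝ} :
    x ∈ coneOf {l} y ↔ ∃ a : ℝ, 0 ≤ a ∧ x = a • y l := by
  rw [coneOf_eq_hull, Finset.coe_singleton, Set.image_singleton, SetLike.mem_coe,
    Submodule.mem_span_singleton]
  constructor
  · rintro ⟨a, rfl⟩; exact ⟨a, a.2, rfl⟩
  · rintro ⟨a, ha, rfl⟩; exact ⟨⟨a, ha⟩, rfl⟩

theorem mem_coneOf_pair {m : ℕ} {y : Fin m → (Fin 2 → ℝ)} {i j : Fin m} {x : Fin 2 → ℝ} :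
    x ∈ coneOf {i, j} y ↔ ∃ a b : ℝ, 0 ≤ a ∧ 0 ≤ b ∧ x = a • y i + b • y j := by
  rw [coneOf_eq_hull, Finset.coe_pair, Set.image_pair, SetLike.mem_coe,
    Submodule.mem_span_pair]
  constructor
  · rintro ⟨a, b, rfl⟩; exact ⟨a, b, a.2, b.2, rfl⟩
  · rintro ⟨a, b, ha, hb, rfl⟩; exact ⟨⟨a, ha⟩, ⟨b, hb⟩, rfl⟩

theorem mem_coneOf_of_mem {m : ℕ} {S : Finset (Fin m)} (y : Fin m → (Fin 2 → ℝ)) {k : Fin m}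
    (hk : k ∈ S) : y k ∈ coneOf S y := by
  rw [coneOf_eq_hull]
  exact PointedCone.subset_hull (Set.mem_image_of_mem y hk)

theorem coneOf_eq_coneOf_univ {m : ℕ} {S : Finset (Fin m)} {y : Fin m → (Fin 2 → ℝ)}
    (h : ∀ i, y i ∈ coneOf S y) : coneOf S y = coneOf Finset.univ y := by
  simp only [coneOf_eq_hull] at h ⊢
  refine congrArg _ (le_antisymm (Submodule.span_mono (Set.image_mono (Finset.subset_univ S))) ?_)
  rw [Submodule.span_le]
  rintro _ ⟨i, -, rfl⟩
  exact h i

theorem two_extreme_angles_solve_minimum_conical_hull_general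
    {m : ℕ} (u : Fin 2 → ℝ)
    (y : Fin m → (Fin 2 → ℝ))
    (hyhalf : ∀ i, 0 < (y i) 0 * u 0 + (y i) 1 * u 1)
    (istar jstar : Fin m)
    (hlt : signedAngle u (y jstar) < signedAngle u (y istar))
    (hmax : ∀ i, i ≠ istar → signedAngle u (y i) < signedAngle u (y istar))
    (hmin : ∀ i, i ≠ jstar → signedAngle u (y jstar) < signedAngle u (y i)) :
    coneOf {istar, jstar} y = coneOf Finset.univ y ∧
      ∀ l : Fin m, coneOf {l} y ≠ coneOf Finset.univ y := by
  have hle_max : ∀ i, signedAngle u (y i) ≤ signedAngle u (y istar) := fun i => by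
    rcases eq_or_ne i istar with rfl | h
    exacts [le_rfl, (hmax i h).le]
  have hmin_le : ∀ i, signedAngle u (y jstar) ≤ signedAngle u (y i) := fun i => by
    rcases eq_or_ne i jstar with rfl | h
    exacts [le_rfl, (hmin i h).le]
  refine ⟨coneOf_eq_coneOf_univ fun i => ?_, fun l hl => ?_⟩
  · obtain ⟨b, a, hb, ha, hi⟩ := exists_nonneg_smul_add_smul_of_cross_nonneg
      ((signedAngle_lt_signedAngle_iff (hyhalf _) (hyhalf _)).1 hlt)
      ((signedAngle_le_signedAngle_iff (hyhalf _) (hyhalf _)).1 (hmin_le i))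
      ((signedAngle_le_signedAngle_iff (hyhalf _) (hyhalf _)).1 (hle_max i))
    exact mem_coneOf_pair.2 ⟨a, b, ha, hb, hi.trans (add_comm _ _)⟩
  · have hangle : ∀ k, signedAngle u (y k) = signedAngle u (y l) := fun k => by
      obtain ⟨a, -, hk⟩ := mem_coneOf_singleton.1 (hl ▸ mem_coneOf_of_mem y (Finset.mem_univ k))
      have ha : a ≠ 0 := by
        rintro rfl
        simpa [hk] using hyhalf k
      rw [hk, signedAngle_smul u (y l) ha]
    exact hlt.ne (by rw [hangle jstar, hangle istar])

/-- The two extreme-angle vectors generate the whole conical hull, and (since the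
vectors are not all parallel) no single vector does; hence `{i*, j*}` solves the
minimum conical hull problem on the 2D plane. -/
theorem two_extreme_angles_solve_minimum_conical_hull
    {m : ℕ} (u : Fin 2 → ℝ) (hu : u 0 ^ 2 + u 1 ^ 2 = 1)
    (y : Fin m → (Fin 2 → ℝ)) (hy : ∀ i, y i ≠ 0)
    (hyhalf : ∀ i, 0 < (y i) 0 * u 0 + (y i) 1 * u 1)
    (istar jstar : Fin m)
    (hlt : signedAngle u (y jstar) < signedAngle u (y istar))
    (hmax : ∀ i, i ≠ istar → signedAngle u (y i) < signedAngle u (y istar))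
    (hmin : ∀ i, i ≠ jstar → signedAngle u (y jstar) < signedAngle u (y i)) :
    coneOf {istar, jstar} y = coneOf Finset.univ y ∧
      ∀ l : Fin m, coneOf {l} y ≠ coneOf Finset.univ y :=
  two_extreme_angles_solve_minimum_conical_hull_general u y hyhalf istar jstar hlt hmax hmin
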